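/- arXiv:2306.10740 — 2 statements merged into one kernel-verified Lean document; each statement's English description precedes it below -/
import Mathlib

section
/- With periodic (or pure interior) meshes, the discrete gradient and discrete divergence are dual: for any piecewise constant scalar field q and vector field v on the mesh, Σ_K |K| [ (∇_T q)_K · v_K + q_K (div_T v)_K ] = 0, where (div_T v)_K = (1/|K|) Σ_{σ=K|L ∈ E(K)} |σ| (v_K+v_L)/2 · ν_{σ,K} and (∇_T q)_K = (1/|K|) Σ_{σ=K|L ∈ E(K)} |σ| (q_K+q_L)/2 ν_{σ,K}. -/
/-!
Let `a σ K = s σ ([c0 σ = K] - [c1 σ = K])` be the signed, area-weighted incidence of face `σ`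
and cell `K`. Multiplied by `|K|`, both operators are sums over faces weighted by `a σ K`, and
summing `a σ K • f σ K` over all cells leaves the jump `s σ (f σ (c0 σ) - f σ (c1 σ))` of `f`
across each face. Exchanging the summations and applying the discrete product rule
`ā Δb + Δa b̄ = Δ(a b)` (averages `ā`, jumps `Δ`) to `q` and `⟪ν σ, v⟫` turns the left-hand side
into the sum of the jumps of `q K * ⟪ν σ, v K⟫`; exchanging back gives
`∑ K, ⟪∑ σ, a σ K • ν σ, q K • v K⟫`, which vanishes because the weighted normals of every cell
sum to zero.
-/

open RealInnerProductSpace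

open Finset

section FaceIncidence

variable {ι F M : Type*} [DecidableEq ι] (c0 c1 : F → ι) (s : F → ℝ)

def faceIncidence (σ : F) (K : ι) : ℝ :=
  (if c0 σ = K then s σ else 0) - (if c1 σ = K then s σ else 0)

theorem ite_sub_ite_mul_eq_faceIncidence_mul (σ : F) (K : ι) (a : ℝ) :
    (if c0 σ = K then s σ * a else 0) - (if c1 σ = K then s σ * a else 0) =
      faceIncidence c0 c1 s σ K * a := by
  simp only [faceIncidence, sub_mul, ite_mul, zero_mul]

variable [Fintype ι] [AddCommGroup M] [Module ℝ M]

theorem sum_faceIncidence_smul (σ : F) (E : ι → M) :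
    ∑ K, faceIncidence c0 c1 s σ K • E K = s σ • (E (c0 σ) - E (c1 σ)) := by
  simp [faceIncidence, sub_smul, ite_smul, sum_sub_distrib, smul_sub]

theorem sum_sum_faceIncidence_smul [Fintype F] (f : F → ι → M) :
    ∑ K, ∑ σ, faceIncidence c0 c1 s σ K • f σ K = ∑ σ, s σ • (f σ (c0 σ) - f σ (c1 σ)) := by
  rw [sum_comm]
  exact sum_congr rfl fun σ _ => sum_faceIncidence_smul c0 c1 s σ (f σ)

end FaceIncidence

theorem mul_inner_inv_smul_sum_ite_sub_ite {ι F E : Type*} [Fintype F] [DecidableEq ι]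
    [NormedAddCommGroup E] [InnerProductSpace ℝ E] (c0 c1 : F → ι) (s a : F → ℝ) (ν : F → E)
    {K : ι} {volK : ℝ} (hK : volK ≠ 0) (w : E) :
    volK * ⟪volK⁻¹ • ∑ σ, ((if c0 σ = K then s σ * a σ else 0)
        - (if c1 σ = K then s σ * a σ else 0)) • ν σ, w⟫ =
      ∑ σ, faceIncidence c0 c1 s σ K * (a σ * ⟪ν σ, w⟫) := by
  rw [real_inner_smul_left, sum_inner, mul_inv_cancel_left₀ hK]
  refine sum_congr rfl fun σ _ => ?_
  rw [real_inner_smul_left, ite_sub_ite_mul_eq_faceIncidence_mul, mul_assoc]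

theorem stmt_11_general {d : ℕ} {ι F : Type*} [Fintype ι] [Fintype F] [DecidableEq ι]
    (vol : ι → ℝ) (hvol : ∀ K, 0 < vol K)
    (c0 c1 : F → ι) (s : F → ℝ)
    (ν : F → EuclideanSpace ℝ (Fin d))
    (q : ι → ℝ) (v : ι → EuclideanSpace ℝ (Fin d))
    (hgeo : ∀ K : ι,
      ∑ σ, ((if c0 σ = K then s σ else 0) - (if c1 σ = K then s σ else 0)) • ν σ = 0)
    (gradT : ι → EuclideanSpace ℝ (Fin d))
    (hgrad : ∀ K, gradT K = (vol K)⁻¹ •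
      ∑ σ, ((if c0 σ = K then s σ * ((q (c0 σ) + q (c1 σ)) / 2) else 0)
            - (if c1 σ = K then s σ * ((q (c0 σ) + q (c1 σ)) / 2) else 0)) • ν σ)
    (divT : ι → ℝ)
    (hdiv : ∀ K, divT K = (vol K)⁻¹ *
      ∑ σ, ((if c0 σ = K then s σ else 0) - (if c1 σ = K then s σ else 0)) *
        ⟪ν σ, (2:ℝ)⁻¹ • (v (c0 σ) + v (c1 σ))⟫) :
    ∑ K, vol K * (⟪gradT K, v K⟫ + q K * divT K) = 0 := by
  have hclosed : ∀ K, ∑ σ, faceIncidence c0 c1 s σ K • ν σ = 0 := hgeo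
  have hdiv' : ∀ K, divT K = (vol K)⁻¹ * ∑ σ, faceIncidence c0 c1 s σ K *
      ⟪ν σ, (2:ℝ)⁻¹ • (v (c0 σ) + v (c1 σ))⟫ := hdiv
  have hcell : ∀ K, vol K * (⟪gradT K, v K⟫ + q K * divT K) =
      ∑ σ, faceIncidence c0 c1 s σ K * ((q (c0 σ) + q (c1 σ)) / 2 * ⟪ν σ, v K⟫
        + q K * ⟪ν σ, (2:ℝ)⁻¹ • (v (c0 σ) + v (c1 σ))⟫) := fun K => by
    rw [mul_add, hgrad, hdiv', mul_inner_inv_smul_sum_ite_sub_ite c0 c1 s _ ν (hvol K).ne',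
      mul_left_comm, mul_inv_cancel_left₀ (hvol K).ne', mul_sum, ← sum_add_distrib]
    exact sum_congr rfl fun σ _ => by ring
  calc ∑ K, vol K * (⟪gradT K, v K⟫ + q K * divT K)
      = ∑ σ, s σ * (((q (c0 σ) + q (c1 σ)) / 2 * ⟪ν σ, v (c0 σ)⟫
          + q (c0 σ) * ⟪ν σ, (2:ℝ)⁻¹ • (v (c0 σ) + v (c1 σ))⟫)
        - ((q (c0 σ) + q (c1 σ)) / 2 * ⟪ν σ, v (c1 σ)⟫
          + q (c1 σ) * ⟪ν σ, (2:ℝ)⁻¹ • (v (c0 σ) + v (c1 σ))⟫)) := by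
        simp_rw [hcell]
        exact sum_sum_faceIncidence_smul c0 c1 s fun σ K =>
          (q (c0 σ) + q (c1 σ)) / 2 * ⟪ν σ, v K⟫ + q K * ⟪ν σ, (2:ℝ)⁻¹ • (v (c0 σ) + v (c1 σ))⟫
    _ = ∑ σ, s σ * (q (c0 σ) * ⟪ν σ, v (c0 σ)⟫ - q (c1 σ) * ⟪ν σ, v (c1 σ)⟫) := by
        refine sum_congr rfl fun σ _ => ?_
        rw [real_inner_smul_right, inner_add_right]
        ring
    _ = ∑ K, ∑ σ, faceIncidence c0 c1 s σ K * (q K * ⟪ν σ, v K⟫) :=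
        (sum_sum_faceIncidence_smul c0 c1 s fun σ K => q K * ⟪ν σ, v K⟫).symm
    _ = ∑ K, ⟪∑ σ, faceIncidence c0 c1 s σ K • ν σ, q K • v K⟫ := by
        simp only [sum_inner, real_inner_smul_left, real_inner_smul_right, mul_left_comm]
    _ = 0 := sum_eq_zero fun K _ => by rw [hclosed K, inner_zero_left]

theorem stmt_11 {d : ℕ} {ι F : Type*} [Fintype ι] [Fintype F] [DecidableEq ι]
    (vol : ι → ℝ) (hvol : ∀ K, 0 < vol K)
    (c0 c1 : F → ι) (s : F → ℝ) (hs : ∀ σ, 0 < s σ)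
    (ν : F → EuclideanSpace ℝ (Fin d))
    (q : ι → ℝ) (v : ι → EuclideanSpace ℝ (Fin d))
    (hgeo : ∀ K : ι,
      ∑ σ, ((if c0 σ = K then s σ else 0) - (if c1 σ = K then s σ else 0)) • ν σ = 0)
    (gradT : ι → EuclideanSpace ℝ (Fin d))
    (hgrad : ∀ K, gradT K = (vol K)⁻¹ •
      ∑ σ, ((if c0 σ = K then s σ * ((q (c0 σ) + q (c1 σ)) / 2) else 0)
            - (if c1 σ = K then s σ * ((q (c0 σ) + q (c1 σ)) / 2) else 0)) • ν σ)
    (divT : ι → ℝ)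
    (hdiv : ∀ K, divT K = (vol K)⁻¹ *
      ∑ σ, ((if c0 σ = K then s σ else 0) - (if c1 σ = K then s σ else 0)) *
        ⟪ν σ, (2:ℝ)⁻¹ • (v (c0 σ) + v (c1 σ))⟫) :
    ∑ K, vol K * (⟪gradT K, v K⟫ + q K * divT K) = 0 :=
  stmt_11_general vol hvol c0 c1 s ν q v hgeo gradT hgrad divT hdiv
end

section
/- With the reconstruction operator R_T and dual gradient (∇_D q)_σ = (|σ|/|D_σ|)(q_L − q_K) ν_{σ,K}, for any 1 ≤ p < ∞ there exists c = c(d,p) such that for every piecewise constant q, ‖R_T q − q‖_{L^p(Ω)} ≤ c h_T ‖∇_D q‖_{L^p(Ω)}, where h_T is the mesh size. -/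
/-!
On the dual half-cells of the edge `σ = K|L` the reconstruction `R_T q` is the convex combination
`μ q_K + (1 - μ) q_L`, so `|R_T q - q| ≤ |q_L - q_K|` there and the error on the whole dual cell
is at most `|D_σ| |q_L - q_K|^p`. Against `|D_σ| |∇_D q|^p = |D_σ| (|σ| / |D_σ| |q_L - q_K|)^p`
this loses the factor `(|D_σ| / |σ|)^p ≤ (c₂ h)^p`, by the upper mesh-regularity bound.
-/

open Real

lemma convex_combo_mem_uIcc {μ : ℝ} (hμ₀ : 0 ≤ μ) (hμ₁ : μ ≤ 1) (a b : ℝ) :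
    μ * a + (1 - μ) * b ∈ Set.uIcc a b := by
  rw [← segment_eq_uIcc]
  exact ⟨μ, 1 - μ, hμ₀, by linarith, by ring, rfl⟩

lemma abs_convex_combo_sub_left_le {μ : ℝ} (hμ₀ : 0 ≤ μ) (hμ₁ : μ ≤ 1) (a b : ℝ) :
    |μ * a + (1 - μ) * b - a| ≤ |b - a| :=
  Set.abs_sub_left_of_mem_uIcc (convex_combo_mem_uIcc hμ₀ hμ₁ a b)

lemma abs_convex_combo_sub_right_le {μ : ℝ} (hμ₀ : 0 ≤ μ) (hμ₁ : μ ≤ 1) (a b : ℝ) :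
    |μ * a + (1 - μ) * b - b| ≤ |b - a| := by
  rw [abs_sub_comm]
  exact Set.abs_sub_right_of_mem_uIcc (convex_combo_mem_uIcc hμ₀ hμ₁ a b)

lemma mul_rpow_add_mul_rpow_le {p m₀ m₁ x y d : ℝ} (hp : 0 ≤ p) (hm₀ : 0 ≤ m₀) (hm₁ : 0 ≤ m₁)
    (hx : |x| ≤ d) (hy : |y| ≤ d) :
    m₀ * |x| ^ p + m₁ * |y| ^ p ≤ (m₀ + m₁) * d ^ p := by
  have hxp : |x| ^ p ≤ d ^ p := rpow_le_rpow (abs_nonneg x) hx hp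
  have hyp : |y| ^ p ≤ d ^ p := rpow_le_rpow (abs_nonneg y) hy hp
  calc m₀ * |x| ^ p + m₁ * |y| ^ p ≤ m₀ * d ^ p + m₁ * d ^ p := by gcongr
    _ = (m₀ + m₁) * d ^ p := by ring

lemma mul_rpow_le_rpow_mul_mul_div_mul_rpow {p K M s d : ℝ} (hp : 0 ≤ p) (hK : 0 ≤ K)
    (hM : 0 ≤ M) (hs : 0 ≤ s) (hd : 0 ≤ d) (hMs : M ≤ K * s) :
    M * d ^ p ≤ K ^ p * (M * (s / M * d) ^ p) := by
  rcases hM.eq_or_lt with rfl | hM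
  · simp
  have hscale : 1 ≤ (K * s / M) ^ p := one_le_rpow ((one_le_div hM).2 hMs) hp
  calc M * d ^ p ≤ (K * s / M) ^ p * (M * d ^ p) := le_mul_of_one_le_left (by positivity) hscale
    _ = K ^ p * (M * (s / M * d) ^ p) := by
      rw [mul_div_assoc, mul_rpow hK (by positivity), mul_rpow (by positivity) hd]
      ring

theorem stmt_13_general (p c₁ c₂ : ℝ) (hp : 1 ≤ p) (hc₂ : 0 < c₂) :
    ∃ c : ℝ, 0 < c ∧
      ∀ (F : Type) [Fintype F],
      ∀ (h : ℝ) (s m0 m1 μ qK qL : F → ℝ),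
        0 < h → (∀ σ, 0 < s σ) → (∀ σ, 0 ≤ m0 σ) → (∀ σ, 0 ≤ m1 σ) →
        (∀ σ, 0 ≤ μ σ ∧ μ σ ≤ 1) →
        (∀ σ, c₁ * h * s σ ≤ m0 σ + m1 σ ∧ m0 σ + m1 σ ≤ c₂ * h * s σ) →
        (∑ σ, (m0 σ * |(μ σ * qK σ + (1 - μ σ) * qL σ) - qK σ| ^ p
             + m1 σ * |(μ σ * qK σ + (1 - μ σ) * qL σ) - qL σ| ^ p))
          ≤ c * h ^ p * ∑ σ, (m0 σ + m1 σ) * (s σ / (m0 σ + m1 σ) * |qL σ - qK σ|) ^ p := by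
  have hp₀ : 0 ≤ p := by linarith
  refine ⟨c₂ ^ p, rpow_pos_of_pos hc₂ p, ?_⟩
  intro F _ h s m0 m1 μ qK qL hh hs hm0 hm1 hμ hreg
  rw [Finset.mul_sum]
  refine Finset.sum_le_sum fun σ _ => ?_
  obtain ⟨hμ₀, hμ₁⟩ := hμ σ
  calc _ ≤ (m0 σ + m1 σ) * |qL σ - qK σ| ^ p :=
        mul_rpow_add_mul_rpow_le hp₀ (hm0 σ) (hm1 σ)
          (abs_convex_combo_sub_left_le hμ₀ hμ₁ _ _) (abs_convex_combo_sub_right_le hμ₀ hμ₁ _ _)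
    _ ≤ (c₂ * h) ^ p * ((m0 σ + m1 σ) * (s σ / (m0 σ + m1 σ) * |qL σ - qK σ|) ^ p) :=
        mul_rpow_le_rpow_mul_mul_div_mul_rpow hp₀ (by positivity) (add_nonneg (hm0 σ) (hm1 σ))
          (hs σ).le (abs_nonneg _) (by linarith [(hreg σ).2])
    _ = _ := by rw [mul_rpow hc₂.le hh.le, mul_assoc]

theorem stmt_13 (p c₁ c₂ : ℝ) (hp : 1 ≤ p) (hc₁ : 0 < c₁) (hc₂ : 0 < c₂) :
    ∃ c : ℝ, 0 < c ∧
      ∀ (F : Type) [Fintype F],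
      ∀ (h : ℝ) (s m0 m1 μ qK qL : F → ℝ),
        0 < h → (∀ σ, 0 < s σ) → (∀ σ, 0 ≤ m0 σ) → (∀ σ, 0 ≤ m1 σ) →
        (∀ σ, 0 ≤ μ σ ∧ μ σ ≤ 1) →
        (∀ σ, c₁ * h * s σ ≤ m0 σ + m1 σ ∧ m0 σ + m1 σ ≤ c₂ * h * s σ) →
        (∑ σ, (m0 σ * |(μ σ * qK σ + (1 - μ σ) * qL σ) - qK σ| ^ p
             + m1 σ * |(μ σ * qK σ + (1 - μ σ) * qL σ) - qL σ| ^ p))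
          ≤ c * h ^ p * ∑ σ, (m0 σ + m1 σ) * (s σ / (m0 σ + m1 σ) * |qL σ - qK σ|) ^ p :=
  stmt_13_general p c₁ c₂ hp hc₂
end
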